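/- arXiv:2310.18071 — 7 statements merged into one kernel-verified Lean document; each statement's English description precedes it below -/
import Mathlib

section
/- Let $d_H$ be an $H$-metric on $\chi$ with parameter $\gamma$. Define $d(p_1,p_2) := d_H(p_1,p_2,\ldots,p_2) + d_H(p_2,p_1,\ldots,p_1)$. Then $d$ is a metric on $\chi$ (it satisfies symmetry, positive definiteness, and the triangle inequality). -/
structure IsHMetric {χ : Type*} (k : ℕ) (γ : ℝ) (dH : (Fin k → χ) → ℝ) : Prop where
  perm : ∀ (π : Equiv.Perm (Fin k)) (p : Fin k → χ), dH (p ∘ π) = dH p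
  nonneg : ∀ p, 0 ≤ dH p
  eq_zero_iff : ∀ p, dH p = 0 ↔ ∀ i j, p i = p j
  triangle : ∀ (p : Fin k → χ) (a : χ) (i : ℕ), 1 ≤ i → i ≤ k →
      dH p ≤ dH (fun j => if (j : ℕ) < i then p j else a)
            + dH (fun j => if (j : ℕ) < i then a else p j)
  sep_ssubset : ∀ p q : Fin k → χ, Set.range p ⊂ Set.range q → dH p ≤ dH q
  sep_eq : ∀ p q : Fin k → χ, Set.range p = Set.range q → dH p ≤ γ * dH q

/-- The induced two-point metric `d(p,q) = d_H(p,q,…,q) + d_H(q,p,…,p)`. -/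
def pairDist {χ : Type*} (k : ℕ) (dH : (Fin k → χ) → ℝ) (p q : χ) : ℝ :=
  dH (fun i => if (i : ℕ) = 0 then p else q) + dH (fun i => if (i : ℕ) = 0 then q else p)

theorem stmt0 {χ : Type*} (k : ℕ) (γ : ℝ) (dH : (Fin k → χ) → ℝ)
    (hk : 2 ≤ k) (hγ0 : 0 ≤ γ) (hγ : γ ≤ (k : ℝ) - 1)
    (h : IsHMetric k γ dH) :
    (∀ p q : χ, pairDist k dH p q = pairDist k dH q p) ∧
    (∀ p q : χ, 0 ≤ pairDist k dH p q) ∧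
    (∀ p q : χ, pairDist k dH p q = 0 ↔ p = q) ∧
    (∀ p q r : χ, pairDist k dH p r ≤ pairDist k dH p q + pairDist k dH q r) := by
  refine ⟨?_, ?_, ?_, ?_⟩
  · intro p q; unfold pairDist; ring
  · intro p q; exact add_nonneg (h.nonneg _) (h.nonneg _)
  · intro p q
    constructor
    · intro h0
      have h1 : dH (fun i : Fin k => if (i : ℕ) = 0 then p else q) = 0 := by
        have := h.nonneg (fun i : Fin k => if (i : ℕ) = 0 then q else p)
        have := h.nonneg (fun i : Fin k => if (i : ℕ) = 0 then p else q)
        unfold pairDist at h0; linarith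
      have := (h.eq_zero_iff _).mp h1 ⟨0, by omega⟩ ⟨1, by omega⟩
      simpa using this
    · rintro rfl
      unfold pairDist
      have h1 : dH (fun i : Fin k => if (i : ℕ) = 0 then p else p) = 0 :=
        (h.eq_zero_iff _).mpr (by intro i j; simp)
      simpa using h1
  · intro p q r
    have t1 := h.triangle (fun i : Fin k => if (i : ℕ) = 0 then p else r) q 1 le_rfl (by omega)
    have t2 := h.triangle (fun i : Fin k => if (i : ℕ) = 0 then r else p) q 1 le_rfl (by omega)
    simp only [Nat.lt_one_iff] at t1 t2
    have e1 : (fun j : Fin k => if (j : ℕ) = 0 then (if (j : ℕ) = 0 then p else r) else q)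
        = (fun j : Fin k => if (j : ℕ) = 0 then p else q) := by
      funext j; by_cases hj : (j : ℕ) = 0 <;> simp [hj]
    have e2 : (fun j : Fin k => if (j : ℕ) = 0 then q else (if (j : ℕ) = 0 then p else r))
        = (fun j : Fin k => if (j : ℕ) = 0 then q else r) := by
      funext j; by_cases hj : (j : ℕ) = 0 <;> simp [hj]
    have e3 : (fun j : Fin k => if (j : ℕ) = 0 then (if (j : ℕ) = 0 then r else p) else q)
        = (fun j : Fin k => if (j : ℕ) = 0 then r else q) := by
      funext j; by_cases hj : (j : ℕ) = 0 <;> simp [hj]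
    have e4 : (fun j : Fin k => if (j : ℕ) = 0 then q else (if (j : ℕ) = 0 then r else p))
        = (fun j : Fin k => if (j : ℕ) = 0 then q else p) := by
      funext j; by_cases hj : (j : ℕ) = 0 <;> simp [hj]
    rw [e1, e2] at t1
    rw [e3, e4] at t2
    unfold pairDist
    linarith
end

section
/- Let $d_H$ be an $H$-metric on $\chi$ with parameter $\gamma$, and define $d(p_1,p_2) := d_H(p_1,p_2,\ldots,p_2) + d_H(p_2,p_1,\ldots,p_1)$. Then for all $p_1,\ldots,p_k \in \chi$ and any $v \in \{p_1,\ldots,p_k\}$: $d_H(p_1,\ldots,p_k) \le \sum_{i=1}^{k} d(v, p_i)$. -/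
/-! Replace the points `p i` by `v` one at a time. Moving the `i`-th point to the front and
applying the triangle inequality with the single point `p i` split off costs
`d_H(p i, v, …, v) ≤ d(v, p i)`, and once every point is `v` the remaining term vanishes. -/

namespace IsHMetric

variable {χ : Type*} {k : ℕ} {γ : ℝ} {dH : (Fin k → χ) → ℝ}

theorem eq_zero_of_const (h : IsHMetric k γ dH) (a : χ) : dH (fun _ => a) = 0 :=
  (h.eq_zero_iff _).2 fun _ _ => rfl

theorem le_add_update (h : IsHMetric k γ dH) (q : Fin k → χ) (m : Fin k) (a : χ) :
    dH q ≤ dH (fun j => if (j : ℕ) = 0 then q m else a) + dH (Function.update q m a) := by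
  have hk : 0 < k := m.pos
  set σ := Equiv.swap (⟨0, hk⟩ : Fin k) m
  have hfront : (fun j : Fin k => if (j : ℕ) < 1 then (q ∘ σ) j else a)
      = fun j : Fin k => if (j : ℕ) = 0 then q m else a := by
    funext j
    rcases eq_or_ne j ⟨0, hk⟩ with rfl | hj0
    · simp [σ]
    · have hj : (j : ℕ) ≠ 0 := fun h => hj0 (Fin.ext h)
      simp [hj]
  have hrest : (fun j : Fin k => if (j : ℕ) < 1 then a else (q ∘ σ) j)
      = Function.update q m a ∘ σ := by
    funext j
    rcases eq_or_ne j ⟨0, hk⟩ with rfl | hj0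
    · simp [σ]
    · have hj : ¬ (j : ℕ) < 1 := fun h => hj0 (Fin.ext (Nat.lt_one_iff.mp h))
      rcases eq_or_ne j m with rfl | hjm
      · simp [σ, hj, hj0.symm]
      · simp [σ, hj, Equiv.swap_apply_of_ne_of_ne hj0 hjm, hjm]
  calc dH q = dH (q ∘ σ) := (h.perm σ q).symm
    _ ≤ _ := h.triangle (q ∘ σ) a 1 le_rfl hk
    _ = _ := by rw [hfront, hrest, h.perm]

theorem le_sum_add_piecewise (h : IsHMetric k γ dH) (p : Fin k → χ) (a : χ)
    (s : Finset (Fin k)) :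
    dH p ≤ ∑ i ∈ s, dH (fun j => if (j : ℕ) = 0 then p i else a)
      + dH (s.piecewise (fun _ => a) p) := by
  classical
  induction s using Finset.induction_on with
  | empty => simp
  | insert m s hm ih =>
    have hstep := h.le_add_update (s.piecewise (fun _ => a) p) m a
    rw [Finset.piecewise_eq_of_notMem _ _ _ hm] at hstep
    rw [Finset.sum_insert hm, Finset.piecewise_insert]
    linarith

theorem le_sum_replace_all (h : IsHMetric k γ dH) (p : Fin k → χ) (a : χ) :
    dH p ≤ ∑ i, dH (fun j => if (j : ℕ) = 0 then p i else a) := by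
  simpa [h.eq_zero_of_const] using h.le_sum_add_piecewise p a Finset.univ

theorem le_pairDist (h : IsHMetric k γ dH) (v x : χ) :
    dH (fun j => if (j : ℕ) = 0 then x else v) ≤ pairDist k dH v x :=
  le_add_of_nonneg_left (h.nonneg _)

end IsHMetric

theorem stmt1_general {χ : Type*} (k : ℕ) (γ : ℝ) (dH : (Fin k → χ) → ℝ)
    (h : IsHMetric k γ dH) (p : Fin k → χ) (v : χ) :
    dH p ≤ ∑ i : Fin k, pairDist k dH v (p i) :=
  (h.le_sum_replace_all p v).trans (Finset.sum_le_sum fun i _ => h.le_pairDist v (p i))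

theorem stmt1 {χ : Type*} (k : ℕ) (γ : ℝ) (dH : (Fin k → χ) → ℝ)
    (hk : 2 ≤ k) (hγ0 : 0 ≤ γ) (hγ : γ ≤ (k : ℝ) - 1)
    (h : IsHMetric k γ dH) (p : Fin k → χ) (v : χ) (hv : v ∈ Set.range p) :
    dH p ≤ ∑ i : Fin k, pairDist k dH v (p i) :=
  stmt1_general k γ dH h p v
end

section
/- Let $d_H$ be an $H$-metric on $\chi$ with parameter $\gamma$, and define $d(p_1,p_2) := d_H(p_1,p_2,\ldots,p_2) + d_H(p_2,p_1,\ldots,p_1)$. Then for all $p_1,\ldots,p_k \in \chi$: $\frac{1}{\gamma k^2} \sum_{1 \le i < j \le k} d(p_i, p_j) \le d_H(p_1,\ldots,p_k)$. -/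
theorem stmt2 {χ : Type*} (k : ℕ) (γ : ℝ) (dH : (Fin k → χ) → ℝ)
    (hk : 2 ≤ k) (hγ0 : 0 ≤ γ) (hγ : γ ≤ (k : ℝ) - 1)
    (h : IsHMetric k γ dH) (p : Fin k → χ) :
    (1 / (γ * (k : ℝ) ^ 2)) *
        ∑ q ∈ Finset.univ.filter (fun q : Fin k × Fin k => q.1 < q.2),
          pairDist k dH (p q.1) (p q.2)
      ≤ dH p := by
  have hdp := h.nonneg p
  rcases lt_or_ge γ 1 with hγ1 | hγ1
  · -- γ < 1 forces dH p = 0 and p constant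
    have h0 : dH p = 0 := by
      have := h.sep_eq p p rfl
      nlinarith
    have hconst : ∀ i j, p i = p j := (h.eq_zero_iff p).mp h0
    have hsum : ∀ q ∈ Finset.univ.filter (fun q : Fin k × Fin k => q.1 < q.2),
        pairDist k dH (p q.1) (p q.2) = 0 := by
      intro q _
      unfold pairDist
      have e1 : dH (fun i : Fin k => if (i : ℕ) = 0 then p q.1 else p q.2) = 0 := by
        rw [h.eq_zero_iff]
        intro i j
        split <;> split <;> first | rfl | exact hconst _ _
      have e2 : dH (fun i : Fin k => if (i : ℕ) = 0 then p q.2 else p q.1) = 0 := by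
        rw [h.eq_zero_iff]
        intro i j
        split <;> split <;> first | rfl | exact hconst _ _
      rw [e1, e2, add_zero]
    rw [Finset.sum_eq_zero hsum, mul_zero, h0]
  · -- main case γ ≥ 1
    have hγpos : (0:ℝ) < γ := lt_of_lt_of_le one_pos hγ1
    have hkpos : (0:ℝ) < (k:ℝ)^2 := by positivity
    have key : ∀ x y : χ, x ∈ Set.range p → y ∈ Set.range p →
        dH (fun m : Fin k => if (m : ℕ) = 0 then x else y) ≤ γ * dH p := by
      intro x y hx hy
      set q : Fin k → χ := fun m => if (m : ℕ) = 0 then x else y with hq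
      have hsub : Set.range q ⊆ Set.range p := by
        rintro z ⟨m, rfl⟩
        simp only [hq]
        split <;> assumption
      rcases hsub.ssubset_or_eq with hss | heq
      · calc dH q ≤ dH p := h.sep_ssubset q p hss
          _ = 1 * dH p := (one_mul _).symm
          _ ≤ γ * dH p := mul_le_mul_of_nonneg_right hγ1 hdp
      · exact h.sep_eq q p heq
    have hpair : ∀ q ∈ Finset.univ.filter (fun q : Fin k × Fin k => q.1 < q.2),
        pairDist k dH (p q.1) (p q.2) ≤ 2 * (γ * dH p) := by
      intro q _
      have h1 := key (p q.1) (p q.2) ⟨q.1, rfl⟩ ⟨q.2, rfl⟩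
      have h2 := key (p q.2) (p q.1) ⟨q.2, rfl⟩ ⟨q.1, rfl⟩
      unfold pairDist
      linarith
    set s := Finset.univ.filter (fun q : Fin k × Fin k => q.1 < q.2) with hs
    set t := Finset.univ.filter (fun q : Fin k × Fin k => q.2 < q.1) with ht
    have hcardeq : s.card = t.card := by
      apply Finset.card_bij (fun q _ => Prod.swap q)
      · intro q hq; simp only [hs, ht, Finset.mem_filter, Finset.mem_univ, true_and] at hq ⊢
        exact hq
      · intro a ha b hb hab; exact Prod.swap_injective hab
      · intro q hq; simp only [hs, ht, Finset.mem_filter, Finset.mem_univ, true_and] at hq ⊢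
        exact ⟨Prod.swap q, hq, (Prod.swap_swap q).symm⟩
    have hdisj : Disjoint s t := by
      rw [Finset.disjoint_left]
      intro q hq hq'
      simp only [hs, ht, Finset.mem_filter, Finset.mem_univ, true_and] at hq hq'
      exact absurd hq' (not_lt.mpr hq.le)
    have hcard2 : 2 * s.card ≤ k ^ 2 := by
      rw [pow_two]
      have : s.card + t.card = (s ∪ t).card := (Finset.card_union_of_disjoint hdisj).symm
      have hle : (s ∪ t).card ≤ (Finset.univ : Finset (Fin k × Fin k)).card :=
        Finset.card_le_card (Finset.subset_univ _)
      simp only [Finset.card_univ, Fintype.card_prod, Fintype.card_fin] at hle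
      omega
    have hsumle : ∑ q ∈ s, pairDist k dH (p q.1) (p q.2) ≤ s.card * (2 * (γ * dH p)) := by
      simpa using Finset.sum_le_card_nsmul s _ _ hpair
    rw [one_div, inv_mul_le_iff₀ (by positivity)]
    calc ∑ q ∈ s, pairDist k dH (p q.1) (p q.2)
        ≤ s.card * (2 * (γ * dH p)) := hsumle
      _ = (2 * s.card) * (γ * dH p) := by ring
      _ ≤ (k:ℝ)^2 * (γ * dH p) := by
          apply mul_le_mul_of_nonneg_right _ (by positivity)
          exact_mod_cast hcard2
      _ = γ * (k:ℝ)^2 * dH p := by ring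
end

section
/- Let $(\chi, d)$ be a metric space and for $p_1,\ldots,p_k \in \chi$ with $k \ge 3$ define $d_{\mathrm{HC}}(p_1,\ldots,p_k)$ as the minimum over all cyclic orderings (permutations $\pi$ of $\{1,\ldots,k\}$) of $\sum_{i=1}^{k} d(p_{\pi(i)}, p_{\pi(i+1)})$ (indices mod $k$), i.e., the minimum cost of a Hamiltonian circuit through $p_1,\ldots,p_k$. Then $d_{\mathrm{HC}}$ satisfies the generalized triangle inequality $\Delta_H$: for all $a \in \chi$ and $1 \le i \le k$, $d_{\mathrm{HC}}(p_1,\ldots,p_k) \le d_{\mathrm{HC}}(p_1,\ldots,p_i,a,\ldots,a) + d_{\mathrm{HC}}(a,\ldots,a,p_{i+1},\ldots,p_k)$. -/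
namespace HCaux

variable {χ : Type*} [MetricSpace χ]

noncomputable def pathCost : List χ → ℝ
  | [] => 0
  | [_] => 0
  | x :: y :: l => dist x y + pathCost (y :: l)

@[simp] lemma pathCost_nil : pathCost ([] : List χ) = 0 := rfl
@[simp] lemma pathCost_single (x : χ) : pathCost [x] = 0 := rfl
@[simp] lemma pathCost_cons_cons (x y : χ) (l : List χ) :
    pathCost (x :: y :: l) = dist x y + pathCost (y :: l) := rfl

lemma pathCost_nonneg : ∀ l : List χ, 0 ≤ pathCost l
  | [] => le_refl _
  | [_] => le_refl _
  | x :: y :: l => add_nonneg dist_nonneg (pathCost_nonneg (y :: l))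

noncomputable def cycleCost (l : List χ) : ℝ := pathCost (l ++ l.take 1)

@[simp] lemma cycleCost_nil : cycleCost ([] : List χ) = 0 := rfl
@[simp] lemma cycleCost_single (x : χ) : cycleCost [x] = 0 := by
  simp [cycleCost]

lemma cycleCost_cons (x : χ) (l : List χ) :
    cycleCost (x :: l) = pathCost (x :: l ++ [x]) := by
  simp [cycleCost]

lemma cycleCost_nonneg (l : List χ) : 0 ≤ cycleCost l := pathCost_nonneg _

lemma pathCost_split : ∀ (l₁ : List χ) (x : χ) (l₂ : List χ),
    pathCost (l₁ ++ x :: l₂) = pathCost (l₁ ++ [x]) + pathCost (x :: l₂)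
  | [], x, l₂ => by simp
  | [u], x, l₂ => by simp [add_assoc]
  | u :: w :: l₁, x, l₂ => by
      have := pathCost_split (w :: l₁) x l₂
      simp only [List.cons_append, pathCost_cons_cons] at this ⊢
      rw [this]; ring

lemma pathCost_endpoint : ∀ (l : List χ) (u b c : χ),
    pathCost (u :: l ++ [b]) ≤ pathCost (u :: l ++ [c]) + dist c b
  | [], u, b, c => by simpa using dist_triangle u c b
  | w :: l, u, b, c => by
      have := pathCost_endpoint l w b c
      simp only [List.cons_append, pathCost_cons_cons] at this ⊢
      linarith

lemma pathCost_removal : ∀ (l₁ : List χ) (x : χ) (l₂ : List χ),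
    pathCost (l₁ ++ l₂) ≤ pathCost (l₁ ++ x :: l₂)
  | [], x, [] => by simp
  | [], x, v :: l₂ => by
      rw [List.nil_append, List.nil_append, pathCost_cons_cons]
      have : (0:ℝ) ≤ dist x v := dist_nonneg
      linarith
  | [u], x, [] => by simpa using dist_nonneg
  | [u], x, v :: l₂ => by
      simp only [List.cons_append, List.nil_append, pathCost_cons_cons]
      have := dist_triangle u x v
      linarith
  | u :: w :: l₁, x, l₂ => by
      have := pathCost_removal (w :: l₁) x l₂
      simp only [List.cons_append, pathCost_cons_cons] at this ⊢
      linarith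

lemma cycleCost_removal : ∀ (l₁ : List χ) (x : χ) (l₂ : List χ),
    cycleCost (l₁ ++ l₂) ≤ cycleCost (l₁ ++ x :: l₂)
  | [], x, [] => by simp
  | [], x, v :: l₂ => by
      rw [List.nil_append, List.nil_append, cycleCost_cons, cycleCost_cons]
      have h := pathCost_endpoint l₂ v v x
      simp only [List.cons_append, pathCost_cons_cons] at h ⊢
      linarith
  | u :: l₁, x, l₂ => by
      rw [List.cons_append, List.cons_append, cycleCost_cons, cycleCost_cons]
      have h := pathCost_removal (u :: l₁) x (l₂ ++ [u])
      simp only [List.cons_append, List.append_assoc] at h ⊢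
      exact h

lemma cycleCost_rotate_one (x : χ) (l : List χ) :
    cycleCost (x :: l) = cycleCost (l ++ [x]) := by
  cases l with
  | nil => simp
  | cons v l =>
      have h := pathCost_split (v :: l) x [v]
      simp only [cycleCost, List.take_succ_cons, List.take_zero, List.cons_append,
        List.nil_append, List.append_assoc, List.singleton_append,
        pathCost_cons_cons, pathCost_single, pathCost_nil] at h ⊢
      linarith [dist_comm x v]

lemma cycleCost_rotate : ∀ (l₁ l₂ : List χ), cycleCost (l₁ ++ l₂) = cycleCost (l₂ ++ l₁)
  | [], l₂ => by simp
  | x :: l₁, l₂ => by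
      rw [List.cons_append, cycleCost_rotate_one, List.append_assoc,
        cycleCost_rotate l₁ (l₂ ++ [x]), List.append_assoc, List.singleton_append]

lemma cycleCost_splice (a : χ) : ∀ (l₁ l₂ : List χ),
    cycleCost (l₁ ++ l₂) ≤ cycleCost (a :: l₁) + cycleCost (a :: l₂)
  | [], l₂ => by
      have h := cycleCost_removal [] a l₂
      have := cycleCost_nonneg (a :: ([]:List χ))
      simp only [List.nil_append] at h ⊢
      linarith
  | u :: l₁, [] => by
      have h := cycleCost_removal [] a (u :: l₁)
      have := cycleCost_nonneg (a :: ([]:List χ))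
      simp only [List.nil_append] at h
      simp only [List.append_nil]
      linarith
  | u :: l₁, v :: l₂ => by
      have hsplit := pathCost_split (u :: l₁) v (l₂ ++ [u])
      have h1 := pathCost_endpoint l₁ u v a
      have h2 := pathCost_endpoint l₂ v u a
      simp only [cycleCost, List.take_succ_cons, List.take_zero, List.cons_append,
        List.nil_append, List.append_assoc, List.singleton_append,
        pathCost_cons_cons, pathCost_single, pathCost_nil] at hsplit h1 h2 ⊢
      linarith [dist_comm a v, dist_comm a u]


lemma reduction [DecidableEq χ] : ∀ (n : ℕ) (l : List χ) (x : χ), n + 1 ≤ l.count x →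
    ∃ m : List χ, (m ++ List.replicate n x).Perm l ∧ cycleCost m ≤ cycleCost l := by
  intro n
  induction n with
  | zero => intro l x _; exact ⟨l, by simp, le_refl _⟩
  | succ n ih =>
      intro l x hc
      have hx : x ∈ l := List.count_pos_iff.mp (by omega)
      obtain ⟨l₁, l₂, rfl⟩ := List.append_of_mem hx
      have hc' : n + 1 ≤ (l₁ ++ l₂).count x := by
        simp only [List.count_append, List.count_cons_self] at hc ⊢
        omega
      obtain ⟨m, hm1, hm2⟩ := ih (l₁ ++ l₂) x hc'
      refine ⟨m, ?_, hm2.trans (cycleCost_removal l₁ x l₂)⟩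
      rw [List.replicate_succ]
      exact (List.perm_middle.trans (hm1.cons x)).trans List.perm_middle.symm

lemma pathCost_ofFn : ∀ (n : ℕ) (g : Fin (n+1) → χ),
    pathCost (List.ofFn g) = ∑ i : Fin n, dist (g i.castSucc) (g i.succ) := by
  intro n
  induction n with
  | zero => intro g; simp [List.ofFn_succ]
  | succ n ih =>
      intro g
      have key : pathCost (List.ofFn g)
          = dist (g 0) (g 1) + pathCost (List.ofFn fun i : Fin (n+1) => g i.succ) := by
        rw [List.ofFn_succ (f := g), List.ofFn_succ (f := fun i : Fin (n+1) => g i.succ),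
          pathCost_cons_cons, ← List.ofFn_succ (f := fun i : Fin (n+1) => g i.succ)]
        norm_num [Fin.succ_zero_eq_one]
      rw [key, ih fun i => g i.succ, Fin.sum_univ_succ, Fin.castSucc_zero,
        Fin.succ_zero_eq_one]
      congr 1

lemma cycleCost_ofFn (n : ℕ) (f : Fin (n+1) → χ) :
    cycleCost (List.ofFn f) = ∑ i : Fin (n+1), dist (f i) (f (finRotate (n+1) i)) := by
  have h1 : List.ofFn (Fin.snoc f (f 0) : Fin (n+2) → χ) = List.ofFn f ++ [f 0] := by
    rw [List.ofFn_succ' (Fin.snoc f (f 0))]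
    simp [List.concat_eq_append]
  have h2 : cycleCost (List.ofFn f) = pathCost (List.ofFn (Fin.snoc f (f 0) : Fin (n+2) → χ)) := by
    rw [h1, cycleCost, List.ofFn_succ, List.take_succ_cons, List.take_zero, ← List.ofFn_succ]
  rw [h2, pathCost_ofFn]
  apply Finset.sum_congr rfl
  intro j _
  rw [Fin.snoc_castSucc]
  congr 1
  · refine Fin.lastCases ?_ ?_ j
    · rw [Fin.succ_last, Fin.snoc_last, finRotate_succ_apply, Fin.last_add_one]
    · intro j
      rw [Fin.succ_castSucc, Fin.snoc_castSucc, finRotate_succ_apply, Fin.coeSucc_eq_succ]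

lemma exists_perm_ofFn {α : Type*} {L₁ L₂ : List α} (h : L₁.Perm L₂) :
    ∀ {n : ℕ} (f : Fin n → α), L₂ = List.ofFn f →
      ∃ σ : Equiv.Perm (Fin n), L₁ = List.ofFn (f ∘ σ) := by
  induction h with
  | nil =>
      intro n f hf
      refine ⟨1, ?_⟩
      simpa [Equiv.Perm.coe_one] using hf
  | @cons x l₁' l₂' h ih =>
      intro n f hf
      cases n with
      | zero => simp at hf
      | succ n =>
          rw [List.ofFn_succ] at hf
          injection hf with hx hl
          obtain ⟨τ, hτ⟩ := ih _ hl
          refine ⟨Equiv.Perm.decomposeFin.symm (0, τ), ?_⟩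
          have hhead : (f ∘ (Equiv.Perm.decomposeFin.symm (0, τ))) 0 = x := by
            simp [hx, Equiv.Perm.decomposeFin_symm_apply_zero]
          have htail : (List.ofFn fun i : Fin n =>
              (f ∘ (Equiv.Perm.decomposeFin.symm (0, τ))) i.succ) = l₁' := by
            rw [hτ]
            congr 1
          rw [List.ofFn_succ, hhead, htail]
  | swap x y l =>
      intro n f hf
      match n, f, hf with
      | 0, f, hf => simp at hf
      | 1, f, hf => simp [List.ofFn_succ] at hf
      | n+2, f, hf =>
        rw [List.ofFn_succ, List.ofFn_succ] at hf
        injection hf with hx hf'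
        injection hf' with hy hl
        refine ⟨Equiv.swap 0 1, ?_⟩
        rw [List.ofFn_succ, List.ofFn_succ]
        have e1 : (f ∘ (Equiv.swap (0 : Fin (n+2)) 1)) 0 = f 1 := by
          simp [Equiv.swap_apply_left]
        have e2 : (f ∘ (Equiv.swap (0 : Fin (n+2)) 1)) (Fin.succ 0) = f 0 := by
          simp [Fin.succ_zero_eq_one, Equiv.swap_apply_right]
        have e3 : (List.ofFn fun i : Fin n =>
              (f ∘ (Equiv.swap (0 : Fin (n+2)) 1)) i.succ.succ)
            = List.ofFn fun i : Fin n => f i.succ.succ := by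
          congr 1
        rw [e1, e2, e3, ← hl, hy, hx, Fin.succ_zero_eq_one]
  | trans h₁ h₂ ih₁ ih₂ =>
      intro n f hf
      obtain ⟨τ, hτ⟩ := ih₂ f hf
      obtain ⟨ρ, hρ⟩ := ih₁ (f ∘ τ) hτ
      refine ⟨ρ.trans τ, ?_⟩
      rw [hρ]
      congr 1

end HCaux

/-- Minimum cost of a Hamiltonian circuit through the (multiset of) points
`p 0, …, p (k-1)`. -/
noncomputable def dHC {χ : Type*} [MetricSpace χ] (k : ℕ) (p : Fin k → χ) : ℝ :=
  ⨅ π : Equiv.Perm (Fin k), ∑ i : Fin k, dist (p (π i)) (p (π (finRotate k i)))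

open HCaux

theorem stmt4 {χ : Type*} [MetricSpace χ] (k : ℕ) (hk : 3 ≤ k)
    (p : Fin k → χ) (a : χ) (i : ℕ) (hi1 : 1 ≤ i) (hik : i ≤ k) :
    dHC k p ≤ dHC k (fun j => if (j : ℕ) < i then p j else a)
            + dHC k (fun j => if (j : ℕ) < i then a else p j) := by
  classical
  obtain ⟨k', rfl⟩ : ∃ k', k = k' + 1 := ⟨k - 1, by omega⟩
  set q1 : Fin (k'+1) → χ := fun j => if (j : ℕ) < i then p j else a with hq1
  set q2 : Fin (k'+1) → χ := fun j => if (j : ℕ) < i then a else p j with hq2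
  have hbdd : ∀ q : Fin (k'+1) → χ, BddBelow (Set.range fun π : Equiv.Perm (Fin (k'+1)) =>
      ∑ j : Fin (k'+1), dist (q (π j)) (q (π (finRotate (k'+1) j)))) := by
    intro q
    refine ⟨0, ?_⟩
    rintro r ⟨π, rfl⟩
    exact Finset.sum_nonneg fun _ _ => dist_nonneg
  have hSc : ∀ (q : Fin (k'+1) → χ) (π : Equiv.Perm (Fin (k'+1))),
      (∑ j : Fin (k'+1), dist (q (π j)) (q (π (finRotate (k'+1) j))))
        = cycleCost (List.ofFn (q ∘ π)) := by
    intro q π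
    rw [cycleCost_ofFn]
    rfl
  have hdHC0 : ∀ q : Fin (k'+1) → χ, 0 ≤ dHC (k'+1) q := by
    intro q
    exact le_ciInf fun π => Finset.sum_nonneg fun _ _ => dist_nonneg
  by_cases hik' : i ≤ k'
  swap
  · -- i = k' + 1 : q1 = p
    have hp1 : q1 = p := by
      funext j
      exact if_pos (by omega)
    rw [hp1]
    exact le_add_of_nonneg_right (hdHC0 q2)
  -- main case
  obtain ⟨π₁, hπ₁⟩ := Finite.exists_min (fun π : Equiv.Perm (Fin (k'+1)) =>
      ∑ j : Fin (k'+1), dist (q1 (π j)) (q1 (π (finRotate (k'+1) j))))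
  obtain ⟨π₂, hπ₂⟩ := Finite.exists_min (fun π : Equiv.Perm (Fin (k'+1)) =>
      ∑ j : Fin (k'+1), dist (q2 (π j)) (q2 (π (finRotate (k'+1) j))))
  have h1le : cycleCost (List.ofFn (q1 ∘ π₁)) ≤ dHC (k'+1) q1 := by
    rw [← hSc q1 π₁]
    exact le_ciInf hπ₁
  have h2le : cycleCost (List.ofFn (q2 ∘ π₂)) ≤ dHC (k'+1) q2 := by
    rw [← hSc q2 π₂]
    exact le_ciInf hπ₂
  have hofq1 : List.ofFn q1 = (List.ofFn p).take i ++ List.replicate (k'+1-i) a := by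
    apply List.ext_getElem
    · simp; omega
    · intro n h1 h2
      simp only [List.getElem_ofFn]
      rw [List.getElem_append]
      split
      · rename_i hn
        simp only [List.length_take, List.length_ofFn] at hn
        rw [List.getElem_take, List.getElem_ofFn]
        simp only [hq1]
        rw [if_pos (by omega)]
      · rename_i hn
        simp only [List.length_take, List.length_ofFn] at hn
        rw [List.getElem_replicate]
        simp only [hq1]
        rw [if_neg (by omega)]
  have hofq2 : List.ofFn q2 = List.replicate i a ++ (List.ofFn p).drop i := by
    apply List.ext_getElem
    · simp; omega
    · intro n h1 h2
      simp only [List.getElem_ofFn]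
      rw [List.getElem_append]
      split
      · rename_i hn
        simp only [List.length_replicate] at hn
        rw [List.getElem_replicate]
        simp only [hq2]
        rw [if_pos (by omega)]
      · rename_i hn
        simp only [List.length_replicate] at hn
        rw [List.getElem_drop, List.getElem_ofFn]
        simp only [hq2]
        rw [if_neg (by omega)]
        congr 1
        ext
        simp
        omega
  have hcount1 : (k' - i) + 1 ≤ (List.ofFn (q1 ∘ π₁)).count a := by
    rw [(Equiv.Perm.ofFn_comp_perm π₁ q1).count_eq, hofq1, List.count_append,
      List.count_replicate_self]
    omega
  have hcount2 : (i - 1) + 1 ≤ (List.ofFn (q2 ∘ π₂)).count a := by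
    rw [(Equiv.Perm.ofFn_comp_perm π₂ q2).count_eq, hofq2, List.count_append,
      List.count_replicate_self]
    omega
  obtain ⟨m1, hm1p, hm1c⟩ := reduction (k' - i) _ a hcount1
  obtain ⟨m2, hm2p, hm2c⟩ := reduction (i - 1) _ a hcount2
  have ha1 : a ∈ m1 := by
    apply List.count_pos_iff.mp
    have := hm1p.count_eq a
    rw [List.count_append, List.count_replicate_self] at this
    omega
  have ha2 : a ∈ m2 := by
    apply List.count_pos_iff.mp
    have := hm2p.count_eq a
    rw [List.count_append, List.count_replicate_self] at this
    omega
  obtain ⟨u1, v1, rfl⟩ := List.append_of_mem ha1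
  obtain ⟨u2, v2, rfl⟩ := List.append_of_mem ha2
  have P1 : ((u1 ++ a :: v1) ++ List.replicate (k'-i) a).Perm
      ((List.ofFn p).take i ++ List.replicate (k'+1-i) a) :=
    hm1p.trans ((Equiv.Perm.ofFn_comp_perm π₁ q1).trans (hofq1 ▸ List.Perm.refl _))
  have P2 : ((u2 ++ a :: v2) ++ List.replicate (i-1) a).Perm
      (List.replicate i a ++ (List.ofFn p).drop i) :=
    hm2p.trans ((Equiv.Perm.ofFn_comp_perm π₂ q2).trans (hofq2 ▸ List.Perm.refl _))
  have hfinal : ((v1 ++ u1) ++ (v2 ++ u2)).Perm (List.ofFn p) := by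
    rw [List.perm_iff_count]
    intro b
    have c1 := P1.count_eq b
    have c2 := P2.count_eq b
    have cp : (List.ofFn p).count b
        = ((List.ofFn p).take i).count b + ((List.ofFn p).drop i).count b := by
      conv_lhs => rw [← List.take_append_drop i (List.ofFn p)]
      rw [List.count_append]
    simp only [List.count_append, List.count_cons, List.count_replicate, beq_iff_eq] at c1 c2 ⊢
    rw [cp]
    by_cases hb : b = a
    · subst hb
      simp only [eq_self_iff_true, if_true] at c1 c2 ⊢
      omega
    · have hb' : ¬ (a = b) := fun h => hb h.symm
      simp only [if_neg hb, if_neg hb'] at c1 c2 ⊢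
      omega
  obtain ⟨σ, hσ⟩ := exists_perm_ofFn hfinal p rfl
  have step1 : dHC (k'+1) p ≤ cycleCost ((v1 ++ u1) ++ (v2 ++ u2)) := by
    have h := ciInf_le (hbdd p) σ
    rw [hSc p σ] at h
    rw [← hσ] at h
    exact h
  have step2 : cycleCost ((v1 ++ u1) ++ (v2 ++ u2))
      ≤ cycleCost (a :: (v1 ++ u1)) + cycleCost (a :: (v2 ++ u2)) :=
    cycleCost_splice a _ _
  have rot1 : cycleCost (a :: (v1 ++ u1)) = cycleCost (u1 ++ a :: v1) := by
    have h : a :: (v1 ++ u1) = (a :: v1) ++ u1 := by simp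
    rw [h, cycleCost_rotate]
  have rot2 : cycleCost (a :: (v2 ++ u2)) = cycleCost (u2 ++ a :: v2) := by
    have h : a :: (v2 ++ u2) = (a :: v2) ++ u2 := by simp
    rw [h, cycleCost_rotate]
  have final1 : cycleCost (a :: (v1 ++ u1)) ≤ dHC (k'+1) q1 := by
    rw [rot1]
    exact hm1c.trans h1le
  have final2 : cycleCost (a :: (v2 ++ u2)) ≤ dHC (k'+1) q2 := by
    rw [rot2]
    exact hm2c.trans h2le
  linarith
end

section
/- Let $k \ge 1$ and let $a_1,\ldots,a_p$ be integers with $0 \le a_i \le k$ for all $i$ and $\sum_{i=1}^p a_i = N$. Then $\sum_{i=1}^{p} a_i (k - a_i) \ge s(k - s)$, where $s = N \bmod k$. -/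
lemma f_subadd (k : ℕ) (hk : 1 ≤ k) (x y : ℕ) :
    ((x + y) % k) * (k - (x + y) % k) ≤ x % k * (k - x % k) + y % k * (k - y % k) := by
  have hs : x % k < k := Nat.mod_lt _ (by omega)
  have ht : y % k < k := Nat.mod_lt _ (by omega)
  rw [Nat.add_mod]
  set s := x % k with hsdef
  set t := y % k with htdef
  rcases lt_or_ge (s + t) k with h | h
  · rw [Nat.mod_eq_of_lt h]
    zify [h.le, hs.le, ht.le]
    nlinarith
  · have h2 : s + t - k < k := by omega
    have : (s + t) % k = s + t - k := by
      rw [Nat.mod_eq_sub_mod h, Nat.mod_eq_of_lt h2]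
    rw [this]
    have h3 : k - (s + t - k) = 2 * k - (s + t) := by omega
    zify [hs.le, ht.le, h, h3, show s + t - k ≤ k by omega, show s + t ≤ 2 * k by omega]
    nlinarith

theorem stmt9 (k : ℕ) (hk : 1 ≤ k) (p : ℕ) (a : Fin p → ℕ)
    (ha : ∀ i, a i ≤ k) (N : ℕ) (hN : ∑ i, a i = N) :
    (N % k) * (k - N % k) ≤ ∑ i, a i * (k - a i) := by
  subst hN
  have h1 : ((∑ i, a i) % k) * (k - (∑ i, a i) % k)
      ≤ ∑ i, (a i % k) * (k - a i % k) :=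
    Finset.le_sum_of_subadditive (fun n => (n % k) * (k - n % k))
      (by simp) (fun x y => f_subadd k hk x y) _ _
  refine h1.trans (Finset.sum_le_sum fun i _ => ?_)
  rcases eq_or_lt_of_le (ha i) with h | h
  · simp [h]
  · rw [Nat.mod_eq_of_lt h]
end

section
/- Let $V$ be a finite set with $|V|$ divisible by $k$, let $\mathcal{M}$ be a partition of $V$ into blocks of size exactly $k$, and let $M = \{(u,v) : u \ne v, \exists F \in \mathcal{M} \text{ with } u,v \in F\}$ be the set of intra-block pairs. Then for every $S \subseteq V$, the number of pairs in $M$ with exactly one endpoint in $S$ is at least $\mathrm{sur}(S) \cdot (k - \mathrm{sur}(S))$, where $\mathrm{sur}(S) = |S| \bmod k$. -/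
/-!
With `a_F = #(S ∩ F)`, the crossing pairs inside a block `F` number `a_F * (k - a_F)`, and
`#S = ∑ a_F`. The map `x ↦ (x % k) * (k - x % k)` only depends on `x % k`, is subadditive, and is
bounded by `x * (k - x)` for `x ≤ k`; summing over the blocks gives the bound.
-/

open Finset

theorem Nat.mod_mul_sub_mod_add_le (k s t : ℕ) :
    (s + t) % k * (k - (s + t) % k) ≤ s % k * (k - s % k) + t % k * (k - t % k) := by
  rcases k.eq_zero_or_pos with rfl | hk
  · simp
  rw [Nat.add_mod]
  have hs := Nat.mod_lt s hk
  have ht := Nat.mod_lt t hk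
  generalize s % k = a at hs ⊢
  generalize t % k = b at ht ⊢
  rcases lt_or_ge (a + b) k with hab | hab
  · rw [Nat.mod_eq_of_lt hab]
    zify [hs.le, ht.le, hab.le]
    nlinarith
  · have hmod : (a + b) % k = a + b - k := by
      rw [Nat.mod_eq_sub_mod hab, Nat.mod_eq_of_lt (by omega)]
    rw [hmod]
    zify [hs.le, ht.le, hab, show a + b - k ≤ k by omega]
    nlinarith

theorem Nat.mod_mul_sub_mod_le {k a : ℕ} (ha : a ≤ k) : a % k * (k - a % k) ≤ a * (k - a) := by
  rcases ha.lt_or_eq with ha | rfl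
  · rw [Nat.mod_eq_of_lt ha]
  · simp

section Partition

variable {V : Type*} {M : Finset (Finset V)}

theorem pairwiseDisjoint_of_existsUnique_mem (hpart : ∀ v : V, ∃! F, F ∈ M ∧ v ∈ F) :
    (M : Set (Finset V)).PairwiseDisjoint id := by
  intro F hF F' hF' hne
  rw [Function.onFun, id, id, Finset.disjoint_left]
  intro v hv hv'
  exact hne ((hpart v).unique ⟨hF, hv⟩ ⟨hF', hv'⟩)

variable [DecidableEq V]

theorem sum_card_inter_eq_card_of_existsUnique_mem {S : Finset V}
    (hpart : ∀ v ∈ S, ∃! F, F ∈ M ∧ v ∈ F) : ∑ F ∈ M, #(S ∩ F) = #S := by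
  rw [sum_card_inter (n := 1) fun v hv => ?_, mul_one]
  obtain ⟨F, hF, hF_unique⟩ := hpart v hv
  exact card_eq_one.mpr ⟨F, eq_singleton_iff_unique_mem.mpr
    ⟨mem_filter.mpr hF, fun F' hF' => hF_unique F' (mem_filter.mp hF')⟩⟩

theorem sum_card_inter_mul_card_sdiff_le [Fintype V] (hpart : ∀ v : V, ∃! F, F ∈ M ∧ v ∈ F)
    (S : Finset V) :
    ∑ F ∈ M, #(S ∩ F) * #(F \ S) ≤
      ((Finset.univ : Finset (V × V)).filter
        (fun q => q.1 ∈ S ∧ q.2 ∉ S ∧ ∃ F ∈ M, q.1 ∈ F ∧ q.2 ∈ F)).card := by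
  have hdisj : (M : Set (Finset V)).PairwiseDisjoint fun F => (S ∩ F) ×ˢ (F \ S) :=
    fun F hF F' hF' hne => disjoint_product.mpr <| Or.inl <|
      (pairwiseDisjoint_of_existsUnique_mem hpart hF hF' hne).mono
        inter_subset_right inter_subset_right
  simp_rw [← card_product, ← card_biUnion hdisj]
  refine card_le_card fun q hq => ?_
  simp only [mem_biUnion, mem_product, mem_inter, mem_sdiff] at hq
  obtain ⟨F, hF, ⟨hq₁S, hq₁F⟩, hq₂F, hq₂S⟩ := hq
  simpa using ⟨hq₁S, hq₂S, F, hF, hq₁F, hq₂F⟩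

end Partition

theorem stmt10_general {V : Type*} [Fintype V] [DecidableEq V] (k : ℕ)
    (M : Finset (Finset V)) (hcard : ∀ F ∈ M, F.card = k)
    (hpart : ∀ v : V, ∃! F, F ∈ M ∧ v ∈ F)
    (S : Finset V) :
    (S.card % k) * (k - S.card % k) ≤
      ((Finset.univ : Finset (V × V)).filter
        (fun q => q.1 ∈ S ∧ q.2 ∉ S ∧ ∃ F ∈ M, q.1 ∈ F ∧ q.2 ∈ F)).card := by
  have hblock_le : ∀ F ∈ M, #(S ∩ F) ≤ k := fun F hF =>
    (card_le_card inter_subset_right).trans (hcard F hF).le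
  calc #S % k * (k - #S % k)
      = (∑ F ∈ M, #(S ∩ F)) % k * (k - (∑ F ∈ M, #(S ∩ F)) % k) := by
        rw [sum_card_inter_eq_card_of_existsUnique_mem fun v _ => hpart v]
    _ ≤ ∑ F ∈ M, #(S ∩ F) % k * (k - #(S ∩ F) % k) :=
        le_sum_of_subadditive (fun x => x % k * (k - x % k)) (by simp)
          (Nat.mod_mul_sub_mod_add_le k) M _
    _ ≤ ∑ F ∈ M, #(S ∩ F) * (k - #(S ∩ F)) :=
        sum_le_sum fun F hF => Nat.mod_mul_sub_mod_le (hblock_le F hF)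
    _ = ∑ F ∈ M, #(S ∩ F) * #(F \ S) :=
        sum_congr rfl fun F hF => by rw [card_sdiff, hcard F hF]
    _ ≤ _ := sum_card_inter_mul_card_sdiff_le hpart S

theorem stmt10 {V : Type*} [Fintype V] [DecidableEq V] (k : ℕ) (hk : 1 ≤ k)
    (M : Finset (Finset V)) (hcard : ∀ F ∈ M, F.card = k)
    (hpart : ∀ v : V, ∃! F, F ∈ M ∧ v ∈ F)
    (S : Finset V) :
    (S.card % k) * (k - S.card % k) ≤
      ((Finset.univ : Finset (V × V)).filter
        (fun q => q.1 ∈ S ∧ q.2 ∉ S ∧ ∃ F ∈ M, q.1 ∈ F ∧ q.2 ∈ F)).card :=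
  stmt10_general k M hcard hpart S
end

section
/- For the instance $\sigma_l$ on the real line with diameter metric $d_{\mathrm{D}}(p_1,\ldots,p_k) = \max_{i,j}|p_i - p_j|$, where $m = sk^2$ requests arrive in $sk$ batches of $k$ requests at points $p_1,\ldots,p_k$ with $|p_{i+1}-p_i| = 2$, at times $t_1 = 0$ and $t_i = 1+(2i-3)\varepsilon$ for $i \ge 2$: the optimal offline cost satisfies $\mathcal{OPT}(\sigma_l) \le k + k\varepsilon + k^3\varepsilon + mk\varepsilon$. Specifically, the algorithm that matches, for each point $p_j$, the $k$ requests arriving at $p_j$ in batches $hk^2+1,\ldots,(h+1)k^2$ has total cost $k(1 + \varepsilon + (k(k-1)-2)\varepsilon + (m/k^2 - 1)k(k-1)\varepsilon) \le k(1+\varepsilon+k^2\varepsilon+m\varepsilon)$. -/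
theorem stmt14 (k s : ℕ) (hk : 2 ≤ k) (hs : 1 ≤ s) (ε : ℝ) (hε : 0 < ε)
    (m : ℕ) (hm : m = s * k ^ 2)
    (t : ℕ → ℝ) (ht1 : t 1 = 0)
    (ht : ∀ i, 2 ≤ i → t i = 1 + (2 * (i : ℝ) - 3) * ε) :
    (k : ℝ) * ∑ h ∈ Finset.range s, ∑ i ∈ Finset.Icc 1 k, (t (h * k + k) - t (h * k + i))
      ≤ (k : ℝ) + k * ε + k ^ 3 * ε + m * k * ε := by
  have gauss : ∀ n : ℕ, ∑ i ∈ Finset.Icc 1 n, (i : ℝ) = n * (n + 1) / 2 := by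
    intro n
    induction n with
    | zero => simp
    | succ n ih =>
      rw [Finset.sum_Icc_succ_top (by omega), ih]
      push_cast; ring
  have key : ∀ h ∈ Finset.range s, ∀ i ∈ Finset.Icc 1 k,
      t (h * k + k) - t (h * k + i)
        ≤ 2 * ((k : ℝ) - i) * ε + (if h = 0 ∧ i = 1 then (1 : ℝ) else 0) := by
    intro h _ i hi
    simp only [Finset.mem_Icc] at hi
    have htop : t (h * k + k) = 1 + (2 * ((h * k + k : ℕ) : ℝ) - 3) * ε :=
      ht _ (by omega)
    by_cases hc : h = 0 ∧ i = 1
    · obtain ⟨h0, i1⟩ := hc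
      subst h0; subst i1
      rw [if_pos ⟨rfl, rfl⟩]
      simp only [Nat.zero_mul, Nat.zero_add] at htop ⊢
      rw [htop, ht1]
      push_cast
      nlinarith [hε]
    · have hge : 2 ≤ h * k + i := by
        rcases Nat.eq_zero_or_pos h with h0 | hpos
        · subst h0; omega
        · have : k ≤ h * k := Nat.le_mul_of_pos_left _ hpos
          omega
      rw [htop, ht _ hge, if_neg hc]
      push_cast
      nlinarith [hε]
  have hsum : ∑ h ∈ Finset.range s, ∑ i ∈ Finset.Icc 1 k, (t (h * k + k) - t (h * k + i))
      ≤ ∑ h ∈ Finset.range s, ∑ i ∈ Finset.Icc 1 k,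
          (2 * ((k : ℝ) - i) * ε + (if h = 0 ∧ i = 1 then (1 : ℝ) else 0)) :=
    Finset.sum_le_sum fun h hh => Finset.sum_le_sum (key h hh)
  have hinner : ∀ h : ℕ, ∑ i ∈ Finset.Icc 1 k,
      (2 * ((k : ℝ) - i) * ε + (if h = 0 ∧ i = 1 then (1 : ℝ) else 0))
      = (k : ℝ) * (k - 1) * ε + (if h = 0 then (1 : ℝ) else 0) := by
    intro h
    rw [Finset.sum_add_distrib]
    have h1 : ∑ i ∈ Finset.Icc 1 k, 2 * ((k : ℝ) - i) * ε = (k : ℝ) * (k - 1) * ε := by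
      have e : ∀ i : ℕ, 2 * ((k : ℝ) - i) * ε = 2 * ε * k - 2 * ε * i := fun i => by ring
      simp only [e]
      rw [Finset.sum_sub_distrib, Finset.sum_const, Nat.card_Icc, ← Finset.mul_sum, gauss,
        Nat.add_sub_cancel, nsmul_eq_mul]
      ring
    have h2 : ∑ i ∈ Finset.Icc 1 k, (if h = 0 ∧ i = 1 then (1 : ℝ) else 0)
        = if h = 0 then (1 : ℝ) else 0 := by
      by_cases h0 : h = 0
      · subst h0
        rw [if_pos rfl]
        simp only [true_and]
        rw [Finset.sum_ite_eq' (Finset.Icc 1 k) 1 (fun _ => (1:ℝ))]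
        simp [Finset.mem_Icc]
        omega
      · simp [h0]
    rw [h1, h2]
  have houter : ∑ h ∈ Finset.range s, ((k : ℝ) * (k - 1) * ε + (if h = 0 then (1 : ℝ) else 0))
      = s * ((k : ℝ) * (k - 1) * ε) + 1 := by
    rw [Finset.sum_add_distrib, Finset.sum_const, Finset.card_range]
    have : ∑ h ∈ Finset.range s, (if h = 0 then (1 : ℝ) else 0) = 1 := by
      rw [Finset.sum_ite_eq' (Finset.range s) 0 (fun _ => (1:ℝ))]
      simp
      omega
    rw [this]; ring
  have htotal : ∑ h ∈ Finset.range s, ∑ i ∈ Finset.Icc 1 k, (t (h * k + k) - t (h * k + i))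
      ≤ s * ((k : ℝ) * (k - 1) * ε) + 1 := by
    calc _ ≤ _ := hsum
    _ = ∑ h ∈ Finset.range s, ((k : ℝ) * (k - 1) * ε + (if h = 0 then (1 : ℝ) else 0)) :=
        Finset.sum_congr rfl fun h _ => hinner h
    _ = _ := houter
  have hk' : (2 : ℝ) ≤ k := by exact_mod_cast hk
  have hs' : (1 : ℝ) ≤ s := by exact_mod_cast hs
  have hm' : (m : ℝ) = s * k ^ 2 := by exact_mod_cast hm
  have hkpos : (0 : ℝ) < k := by linarith
  have := mul_le_mul_of_nonneg_left htotal (le_of_lt hkpos)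
  rw [hm']
  nlinarith [hε, mul_pos hε hkpos, mul_pos (mul_pos hε hkpos) hkpos]
end
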